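/- arXiv:math/9903115 — 2 statements merged into one kernel-verified Lean document; each statement's English description precedes it below -/
import Mathlib

section
/- Let L = Zα₁ ⊕ Zα₂ ⊕ Zα₃ be a rank-3 lattice with ⟨αᵢ, αⱼ⟩ = 2δᵢⱼ, and let N = {β ∈ L : ⟨α₁+α₂+α₃, β⟩ ≡ 0 (mod 4)}. Then N equals the sublattice of L generated by all elements αᵢ ± αⱼ for 1 ≤ i, j ≤ 3. -/
/-- The basis vectors α₁, α₂, α₃ of the lattice `L = Zα₁ ⊕ Zα₂ ⊕ Zα₃`. -/
def latAlpha (i : Fin 3) : Fin 3 → ℤ := Pi.single i 1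

/-- The bilinear form on `L` determined by `⟨αᵢ, αⱼ⟩ = 2δᵢⱼ`. -/
def latB (x y : Fin 3 → ℤ) : ℤ := 2 * ∑ i, x i * y i

/-!
Pairing with `α₁ + α₂ + α₃` gives twice the coordinate sum, so `N` is the lattice `D₃` of vectors
with even coordinate sum. In any `ℤⁿ` the vectors `eᵢ ± eⱼ` have even coordinate sum; conversely,
a vector `β` with coordinate sum `2k` equals `∑ᵢ βᵢ (eᵢ - e₀) + k (e₀ + e₀)`.
-/

section EvenCoordSum

variable (ι : Type*) [Fintype ι]

def evenCoordSumSubgroup : AddSubgroup (ι → ℤ) where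
  carrier := {β | Even (∑ i, β i)}
  add_mem' {β γ} hβ hγ := by
    simpa only [Set.mem_ofPred_eq, Pi.add_apply, Finset.sum_add_distrib] using Even.add hβ hγ
  zero_mem' := by simp
  neg_mem' {β} hβ := by
    simpa only [Set.mem_ofPred_eq, Pi.neg_apply, Finset.sum_neg_distrib] using Even.neg hβ

theorem mem_evenCoordSumSubgroup {β : ι → ℤ} :
    β ∈ evenCoordSumSubgroup ι ↔ Even (∑ i, β i) :=
  Iff.rfl

variable [DecidableEq ι]

def plusMinusSingles : Set (ι → ℤ) :=
  {v | ∃ i j : ι, v = Pi.single i 1 + Pi.single j 1 ∨ v = Pi.single i 1 - Pi.single j 1}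

variable {ι}

theorem closure_plusMinusSingles_le :
    AddSubgroup.closure (plusMinusSingles ι) ≤ evenCoordSumSubgroup ι := by
  rw [AddSubgroup.closure_le]
  rintro v ⟨i, j, rfl | rfl⟩ <;>
    simp [mem_evenCoordSumSubgroup, Finset.sum_add_distrib, Finset.sum_sub_distrib,
      Finset.sum_pi_single']

theorem evenCoordSumSubgroup_le_closure :
    evenCoordSumSubgroup ι ≤ AddSubgroup.closure (plusMinusSingles ι) := by
  intro β hβ
  cases isEmpty_or_nonempty ι with
  | inl _ => exact Subsingleton.elim β 0 ▸ zero_mem _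
  | inr hι =>
    obtain ⟨i₀⟩ := hι
    obtain ⟨k, hk⟩ := hβ
    have hdecomp :
        β = ∑ i, β i • (Pi.single i 1 - Pi.single i₀ 1) +
          k • (Pi.single i₀ 1 + Pi.single i₀ 1) := by
      simp only [smul_sub, Finset.sum_sub_distrib, ← Finset.sum_smul, hk, ← pi_eq_sum_univ',
        smul_add, add_smul]
      abel
    have hadd : Pi.single i₀ 1 + Pi.single i₀ 1 ∈ AddSubgroup.closure (plusMinusSingles ι) :=
      AddSubgroup.subset_closure ⟨i₀, i₀, Or.inl rfl⟩
    have hsub (i : ι) :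
        Pi.single i 1 - Pi.single i₀ 1 ∈ AddSubgroup.closure (plusMinusSingles ι) :=
      AddSubgroup.subset_closure ⟨i, i₀, Or.inr rfl⟩
    rw [hdecomp]
    exact add_mem (sum_mem fun i _ ↦ zsmul_mem (hsub i) _) (zsmul_mem hadd _)

theorem closure_plusMinusSingles :
    AddSubgroup.closure (plusMinusSingles ι) = evenCoordSumSubgroup ι :=
  le_antisymm closure_plusMinusSingles_le evenCoordSumSubgroup_le_closure

end EvenCoordSum

theorem latB_latAlpha_sum (β : Fin 3 → ℤ) :
    latB (latAlpha 0 + latAlpha 1 + latAlpha 2) β = 2 * ∑ i, β i := by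
  simp [latB, latAlpha, Fin.sum_univ_three, Pi.single_apply]

/-- `N = {β ∈ L : ⟨α₁+α₂+α₃, β⟩ ≡ 0 (mod 4)}` equals the sublattice generated by
the elements `αᵢ ± αⱼ`. -/
theorem stmt0 :
    {β : Fin 3 → ℤ | (4 : ℤ) ∣ latB (latAlpha 0 + latAlpha 1 + latAlpha 2) β} =
      (AddSubgroup.closure {v : Fin 3 → ℤ | ∃ i j : Fin 3,
        v = latAlpha i + latAlpha j ∨ v = latAlpha i - latAlpha j} :
        Set (Fin 3 → ℤ)) := by
  have hgen : {v : Fin 3 → ℤ | ∃ i j : Fin 3,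
      v = latAlpha i + latAlpha j ∨ v = latAlpha i - latAlpha j} = plusMinusSingles (Fin 3) :=
    rfl
  rw [hgen, closure_plusMinusSingles]
  ext β
  rw [Set.mem_ofPred_eq, SetLike.mem_coe, mem_evenCoordSumSubgroup, latB_latAlpha_sum,
    even_iff_two_dvd]
  omega
end

section
/- Every element of the coset D + α₂ (where D = E ⊕ F as above) can be uniquely written as an orthogonal sum x + y with x ∈ E + √2(β₁−β₂)/3 and y ∈ F + γ/3. -/
def latAlphaQ (i : Fin 3) : Fin 3 → ℚ := Pi.single i 1

def latBQ (x y : Fin 3 → ℚ) : ℚ := 2 * ∑ i, x i * y i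

/-- `E = Z(α₁+α₂) + Z(−α₂+α₃)` inside `L ⊗ ℚ`. -/
def latEQ : AddSubgroup (Fin 3 → ℚ) :=
  AddSubgroup.closure {latAlphaQ 0 + latAlphaQ 1, -(latAlphaQ 1) + latAlphaQ 2}

/-- `γ = −α₁+α₂+α₃`. -/
def gammaQ : Fin 3 → ℚ := -(latAlphaQ 0) + latAlphaQ 1 + latAlphaQ 2

/-- `F = Zγ` inside `L ⊗ ℚ`. -/
def latFQ : AddSubgroup (Fin 3 → ℚ) := AddSubgroup.zmultiples gammaQ

/-- `D = E ⊕ F`. -/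
def latDQ : AddSubgroup (Fin 3 → ℚ) := latEQ ⊔ latFQ

/-- The coset representative `√2(β₁−β₂)/3 = ((α₁+α₂) − (−α₂+α₃))/3`. -/
def cosetE : Fin 3 → ℚ := (3 : ℚ)⁻¹ • ((latAlphaQ 0 + latAlphaQ 1) - (-(latAlphaQ 1) + latAlphaQ 2))

/-- The coset representative `γ/3`. -/
def cosetF : Fin 3 → ℚ := (3 : ℚ)⁻¹ • gammaQ

/-!
Since `α₂ = √2(β₁−β₂)/3 + γ/3`, the coset `D + α₂` is the sum of the cosets
`E + √2(β₁−β₂)/3` and `F + γ/3`, and the summands are unique because `E ∩ F = 0`.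
Orthogonality of every such decomposition comes from `E ⊥ γ`: both cosets lie in the
rational spans `ℚE ⊆ γ^⊥` and `ℚγ`.
-/

theorem existsUnique_add_of_sub_mem_sup {V : Type*} [AddCommGroup V] {E F : AddSubgroup V}
    (hEF : Disjoint E F) {u v z : V} (hz : z - (u + v) ∈ E ⊔ F) :
    ∃! p : V × V, p.1 - u ∈ E ∧ p.2 - v ∈ F ∧ z = p.1 + p.2 := by
  obtain ⟨e, he, f, hf, hef⟩ := AddSubgroup.mem_sup.1 hz
  obtain rfl : z = u + e + (v + f) := by rw [eq_sub_iff_add_eq] at hef; rw [← hef]; abel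
  refine ⟨(u + e, v + f), ⟨by simpa using he, by simpa using hf, rfl⟩, ?_⟩
  rintro ⟨x, y⟩ ⟨hx, hy, hxy⟩
  dsimp only at hx hy hxy
  have hxE : x - (u + e) ∈ E := by convert E.sub_mem hx he using 1; abel
  have hxF : x - (u + e) ∈ F := by
    rw [show x - (u + e) = v + f - y by rw [sub_eq_sub_iff_add_eq_add, ← hxy]; abel]
    convert F.sub_mem hf hy using 1; abel
  obtain rfl : x = u + e := sub_eq_zero.1 (AddSubgroup.disjoint_def.1 hEF hxE hxF)
  obtain rfl : y = v + f := (add_left_cancel hxy).symm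
  rfl

theorem latBQ_comm (x w : Fin 3 → ℚ) : latBQ x w = latBQ w x := by
  simp only [latBQ, mul_comm (x _)]

theorem latBQ_add_left (x y w : Fin 3 → ℚ) : latBQ (x + y) w = latBQ x w + latBQ y w := by
  simp only [latBQ, Pi.add_apply, add_mul, Finset.sum_add_distrib, mul_add]

theorem latBQ_neg_left (x w : Fin 3 → ℚ) : latBQ (-x) w = -latBQ x w := by
  simp only [latBQ, Pi.neg_apply, neg_mul, Finset.sum_neg_distrib, mul_neg]

theorem latBQ_smul_right (x w : Fin 3 → ℚ) (c : ℚ) : latBQ x (c • w) = c * latBQ x w := by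
  simp only [latBQ, Pi.smul_apply, smul_eq_mul, Finset.mul_sum]
  congr 1; ext i; ring

theorem latBQ_gammaQ_self : latBQ gammaQ gammaQ = 6 := by
  simp [latBQ, Fin.sum_univ_three, gammaQ, latAlphaQ]; norm_num

theorem latBQ_cosetE_gammaQ : latBQ cosetE gammaQ = 0 := by
  simp [latBQ, Fin.sum_univ_three, cosetE, gammaQ, latAlphaQ]; norm_num

theorem cosetE_add_cosetF : cosetE + cosetF = latAlphaQ 1 := by
  simp only [cosetE, cosetF, gammaQ]
  module

theorem latBQ_gammaQ_eq_zero_of_mem_latEQ {x : Fin 3 → ℚ} (hx : x ∈ latEQ) :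
    latBQ x gammaQ = 0 := by
  induction hx using AddSubgroup.closure_induction with
  | mem y hy =>
    rcases hy with rfl | rfl <;> simp [latBQ, Fin.sum_univ_three, gammaQ, latAlphaQ]
  | zero => simp [latBQ]
  | add y w _ _ hy hw => rw [latBQ_add_left, hy, hw, add_zero]
  | neg y _ hy => rw [latBQ_neg_left, hy, neg_zero]

theorem disjoint_latEQ_latFQ : Disjoint latEQ latFQ := by
  refine AddSubgroup.disjoint_def.2 fun {x} hxE hxF => ?_
  obtain ⟨c, rfl⟩ := AddSubgroup.mem_zmultiples_iff.1 hxF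
  have h := latBQ_gammaQ_eq_zero_of_mem_latEQ hxE
  rw [← Int.cast_smul_eq_zsmul ℚ, latBQ_comm, latBQ_smul_right, latBQ_gammaQ_self] at h
  obtain rfl : c = 0 := by exact_mod_cast (mul_eq_zero.1 h).resolve_right (by norm_num)
  exact zero_zsmul _

theorem latBQ_eq_zero_of_sub_mem {x y : Fin 3 → ℚ} (hx : x - cosetE ∈ latEQ)
    (hy : y - cosetF ∈ latFQ) : latBQ x y = 0 := by
  obtain ⟨c, hc⟩ := AddSubgroup.mem_zmultiples_iff.1 hy
  have hy' : y = (3⁻¹ + c : ℚ) • gammaQ := by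
    rw [add_smul, Int.cast_smul_eq_zsmul, hc, ← cosetF, add_sub_cancel]
  have hxγ : latBQ x gammaQ = 0 := by
    rw [← add_sub_cancel cosetE x, latBQ_add_left, latBQ_cosetE_gammaQ,
      latBQ_gammaQ_eq_zero_of_mem_latEQ hx, add_zero]
  rw [hy', latBQ_smul_right, hxγ, mul_zero]

/-- Every element of the coset `D + α₂` can be uniquely written as an orthogonal
sum `x + y` with `x ∈ E + √2(β₁−β₂)/3` and `y ∈ F + γ/3`. -/
theorem stmt7 :
    ∀ z : Fin 3 → ℚ, z - latAlphaQ 1 ∈ latDQ →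
      ∃! p : (Fin 3 → ℚ) × (Fin 3 → ℚ),
        p.1 - cosetE ∈ latEQ ∧ p.2 - cosetF ∈ latFQ ∧ z = p.1 + p.2 ∧
          latBQ p.1 p.2 = 0 := by
  intro z hz
  rw [← cosetE_add_cosetF] at hz
  obtain ⟨p, ⟨hpE, hpF, hpz⟩, hp_unique⟩ :=
    existsUnique_add_of_sub_mem_sup disjoint_latEQ_latFQ hz
  exact ⟨p, ⟨hpE, hpF, hpz, latBQ_eq_zero_of_sub_mem hpE hpF⟩,
    fun q ⟨hqE, hqF, hqz, _⟩ => hp_unique q ⟨hqE, hqF, hqz⟩⟩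
end
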